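/- For 0 < y ≤ 1 and ρ ≥ 1, the difference β(ρ sinh y) - β(ρ y) equals ρ⁻² x³ b(x/ρ) ∫₀¹ β′(x + ρ⁻² x³ b(x/ρ) t) dt, where x = ρ y and b is the smooth function with sinh(s) = s + s³ b(s); consequently |β(ρ sinh y) - β(ρ y)| ≤ C ρ⁻² sup_{z ≥ ρ y} |β′(z)| (1+|z|)³. -/

import Mathlib

/-!
Write `x = ρ y` and `K = ρ (sinh y - y)`. The definition of `b` gives `ρ⁻² x³ b(x/ρ) = K`, so the
identity is the fundamental theorem of calculus for `β` on `[x, x + K]` after rescaling to `[0, 1]`.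
For the bound, the integrand is evaluated at points `z ≥ x`, where
`|β′ z| ≤ S / (1 + x)³` with `S = sup_{z ≥ x} |β′ z| (1 + |z|)³`, while `sinh y - y ≤ y³` on `[0, 1]`
gives `K ≤ ρ y³ = ρ⁻² x³ ≤ ρ⁻² (1 + x)³`. So the estimate holds with `C = 1`.
-/

open Set

lemma Real.sinh_le_self_add_pow_three {y : ℝ} (h0 : 0 ≤ y) (h1 : y ≤ 1) :
    Real.sinh y ≤ y + y ^ 3 := by
  have hy : |y| = y := abs_of_nonneg h0
  have hp := Real.exp_bound (x := y) (by rwa [hy]) (n := 3) (by norm_num)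
  have hn := Real.exp_bound (x := -y) (by rwa [abs_neg, hy]) (n := 3) (by norm_num)
  simp only [Finset.sum_range_succ, Finset.sum_range_zero] at hp hn
  rw [abs_le] at hp hn
  rw [abs_neg, hy] at hn
  rw [hy] at hp
  rw [Real.sinh_eq]
  norm_num [Nat.factorial] at hp hn
  nlinarith [hp.2, hn.1]

lemma mul_sinh_sub_self_le {ρ y : ℝ} (hρ : 0 < ρ) (hy0 : 0 ≤ y) (hy1 : y ≤ 1) :
    ρ * (Real.sinh y - y) ≤ ρ⁻¹ ^ 2 * (1 + ρ * y) ^ 3 := calc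
  ρ * (Real.sinh y - y) ≤ ρ * y ^ 3 := by
    gcongr; linarith [Real.sinh_le_self_add_pow_three hy0 hy1]
  _ = ρ⁻¹ ^ 2 * (ρ * y) ^ 3 := by field_simp
  _ ≤ ρ⁻¹ ^ 2 * (1 + ρ * y) ^ 3 := by gcongr; linarith

lemma sub_eq_mul_integral_deriv {f : ℝ → ℝ} (hf : ContDiff ℝ 1 f) (a h : ℝ) :
    f (a + h) - f a = h * ∫ t in (0 : ℝ)..1, deriv f (a + h * t) := by
  rcases eq_or_ne h 0 with rfl | hh
  · simp
  rw [intervalIntegral.integral_comp_add_mul (deriv f) hh a,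
    intervalIntegral.integral_deriv_eq_sub (fun x _ => (hf.differentiable one_ne_zero).differentiableAt)
      ((hf.continuous_deriv le_rfl).intervalIntegrable _ _)]
  simp only [mul_one, mul_zero, add_zero, smul_eq_mul]
  field_simp

lemma Real.le_biSup_of_nonneg {ι : Type*} {f : ι → ℝ} {s : Set ι} {M : ℝ}
    (hf0 : ∀ i, 0 ≤ f i) (hfM : ∀ i, f i ≤ M) {i : ι} (hi : i ∈ s) :
    f i ≤ ⨆ j ∈ s, f j := by
  have hbdd : BddAbove (range fun j => ⨆ _ : j ∈ s, f j) :=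
    ⟨M, forall_mem_range.2 fun j => Real.iSup_le (fun _ => hfM j) ((hf0 j).trans (hfM j))⟩
  exact le_ciSup_of_le hbdd i (ciSup_pos (f := fun _ => f i) hi).ge

lemma abs_integral_comp_add_mul_le {f : ℝ → ℝ} {x K S : ℝ} (n : ℕ) (hx : 0 ≤ x) (hK : 0 ≤ K)
    (hS : ∀ z, x ≤ z → |f z| * (1 + |z|) ^ n ≤ S) :
    |∫ t in (0 : ℝ)..1, f (x + K * t)| ≤ S / (1 + x) ^ n := by
  have hpointwise : ∀ t ∈ uIoc (0 : ℝ) 1, ‖f (x + K * t)‖ ≤ S / (1 + x) ^ n := by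
    intro t ht
    rw [uIoc_of_le zero_le_one] at ht
    have hxz : x ≤ x + K * t := le_add_of_nonneg_right (mul_nonneg hK ht.1.le)
    rw [Real.norm_eq_abs, le_div_iff₀ (by positivity)]
    calc |f (x + K * t)| * (1 + x) ^ n
        ≤ |f (x + K * t)| * (1 + |x + K * t|) ^ n := by
          gcongr
          exact hxz.trans (le_abs_self _)
      _ ≤ S := hS _ hxz
  simpa using intervalIntegral.norm_integral_le_of_norm_le_const hpointwise

theorem stmt3_general (β : ℝ → ℝ) (hβ : ContDiff ℝ 1 β)
    (hdecay : ∀ n : ℕ, ∃ M : ℝ, ∀ z : ℝ, |deriv β z| * (1 + |z|) ^ n ≤ M)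
    (b : ℝ → ℝ) (hb : ∀ s : ℝ, s ≠ 0 → b s = (Real.sinh s - s) / s ^ 3) :
    ∃ C : ℝ, 0 < C ∧ ∀ ρ : ℝ, 1 ≤ ρ → ∀ y : ℝ, 0 < y → y ≤ 1 →
      (β (ρ * Real.sinh y) - β (ρ * y)
          = ρ⁻¹ ^ 2 * (ρ * y) ^ 3 * b (ρ * y / ρ) *
            ∫ t in (0 : ℝ)..1,
              deriv β (ρ * y + ρ⁻¹ ^ 2 * (ρ * y) ^ 3 * b (ρ * y / ρ) * t)) ∧
        |β (ρ * Real.sinh y) - β (ρ * y)|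
          ≤ C * ρ⁻¹ ^ 2 * ⨆ z ∈ {z : ℝ | ρ * y ≤ z}, |deriv β z| * (1 + |z|) ^ 3 := by
  refine ⟨1, one_pos, fun ρ hρ y hy0 hy1 => ?_⟩
  have hρ0 : 0 < ρ := one_pos.trans_le hρ
  have hK : ρ⁻¹ ^ 2 * (ρ * y) ^ 3 * b (ρ * y / ρ) = ρ * (Real.sinh y - y) := by
    rw [mul_div_cancel_left₀ y hρ0.ne', hb y hy0.ne']
    field_simp
  have hsinh : ρ * Real.sinh y = ρ * y + ρ * (Real.sinh y - y) := by ring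
  have hK0 : 0 ≤ ρ * (Real.sinh y - y) :=
    mul_nonneg hρ0.le (sub_nonneg.2 (Real.self_le_sinh_iff.2 hy0.le))
  obtain ⟨M, hM⟩ := hdecay 3
  have hS : ∀ z, ρ * y ≤ z →
      |deriv β z| * (1 + |z|) ^ 3 ≤ ⨆ z ∈ {z : ℝ | ρ * y ≤ z}, |deriv β z| * (1 + |z|) ^ 3 :=
    fun z hz => Real.le_biSup_of_nonneg (fun _ => by positivity) hM hz
  have hI := abs_integral_comp_add_mul_le 3 (by positivity) hK0 hS
  rw [hK, hsinh, sub_eq_mul_integral_deriv hβ, abs_mul, abs_of_nonneg hK0]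
  refine ⟨rfl, ?_⟩
  calc ρ * (Real.sinh y - y) * |∫ t in (0 : ℝ)..1, deriv β (ρ * y + ρ * (Real.sinh y - y) * t)|
      ≤ ρ⁻¹ ^ 2 * (1 + ρ * y) ^ 3 * (_ / (1 + ρ * y) ^ 3) := 
        mul_le_mul (mul_sinh_sub_self_le hρ0 hy0.le hy1) hI (abs_nonneg _) (by positivity)
    _ = 1 * ρ⁻¹ ^ 2 * _ := by field_simp

/-- For `0 < y ≤ 1` and `ρ ≥ 1`, with `x = ρ y` and `b(s) = (sinh s - s)/s³` (b(0)=1/6),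
`β(ρ sinh y) - β(ρ y) = ρ⁻² x³ b(x/ρ) ∫₀¹ β′(x + ρ⁻² x³ b(x/ρ) t) dt`, and consequently
`|β(ρ sinh y) - β(ρ y)| ≤ C ρ⁻² sup_{z ≥ ρ y} |β′(z)| (1+|z|)³`. -/
theorem stmt3 (β : ℝ → ℝ) (hβ : ContDiff ℝ 1 β)
    (hdecay : ∀ n : ℕ, ∃ M : ℝ, ∀ z : ℝ, |deriv β z| * (1 + |z|) ^ n ≤ M)
    (b : ℝ → ℝ) (hb : ∀ s : ℝ, s ≠ 0 → b s = (Real.sinh s - s) / s ^ 3)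
    (hb0 : b 0 = 1 / 6) :
    ∃ C : ℝ, 0 < C ∧ ∀ ρ : ℝ, 1 ≤ ρ → ∀ y : ℝ, 0 < y → y ≤ 1 →
      (β (ρ * Real.sinh y) - β (ρ * y)
          = ρ⁻¹ ^ 2 * (ρ * y) ^ 3 * b (ρ * y / ρ) *
            ∫ t in (0 : ℝ)..1,
              deriv β (ρ * y + ρ⁻¹ ^ 2 * (ρ * y) ^ 3 * b (ρ * y / ρ) * t)) ∧
        |β (ρ * Real.sinh y) - β (ρ * y)|
          ≤ C * ρ⁻¹ ^ 2 * ⨆ z ∈ {z : ℝ | ρ * y ≤ z}, |deriv β z| * (1 + |z|) ^ 3 :=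
  stmt3_general β hβ hdecay b hb
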